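/- Let A ∈ 𝒞^n be an n-cylinder. Then for any two distinct secondary periods i, j ∈ ℛ(A), the sets T^{−i}A and T^{−j}A are disjoint: T^{−i}A ∩ T^{−j}A = ∅. -/

import Mathlib

open MeasureTheory ProbabilityTheory Set Filter ENNReal

namespace ReturnTimes

variable {𝒞 : Type*}

/-- Bi-infinite sequences over the alphabet `𝒞`. -/
abbrev Omega (𝒞 : Type*) := ℤ → 𝒞

/-- The shift `T^k`: `(shiftk k x) m = x (m + k)`.  Thus `T = shiftk 1` and
`T^{-k} A = shiftk k ⁻¹' A`. -/
def shiftk (k : ℤ) (x : Omega 𝒞) : Omega 𝒞 := fun m => x (m + k)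

/-- Stationarity: `ℙ` is invariant under the shift. -/
def Stationary [MeasurableSpace 𝒞] (μ : MeasureTheory.Measure (Omega 𝒞)) : Prop :=
  ∀ S : Set (Omega 𝒞), μ (shiftk 1 ⁻¹' S) = μ S

/-- The `n`-cylinder `A = {X_0 = a_0, …, X_{n-1} = a_{n-1}}` given by the word `a`. -/
def cyl (n : ℕ) (a : ℕ → 𝒞) : Set (Omega 𝒞) := {x | ∀ i < n, x (i : ℤ) = a i}

/-- `A^{(w)} = {X_{n-w} = a_{n-w}, …, X_{n-1} = a_{n-1}}`, the cylinder on the last `w`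
symbols of the word `a` (equal to `univ` when `w = 0`). -/
def cylLast (n w : ℕ) (a : ℕ → 𝒞) : Set (Omega 𝒞) :=
  {x | ∀ i : ℕ, n - w ≤ i → i < n → x (i : ℤ) = a i}

/-- The event `{τ_A > t}` for a real `t`, where `τ_A(x) = inf {k ≥ 1 : T^k x ∈ A}`. -/
def tauGT (A : Set (Omega 𝒞)) (t : ℝ) : Set (Omega 𝒞) :=
  {x | ∀ k : ℕ, 1 ≤ k → (k : ℝ) ≤ t → shiftk (k : ℤ) x ∉ A}

/-- The hitting time `τ_A(x) = inf {k ≥ 1 : T^k x ∈ A}`, with values in `ℕ∞`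
(`⊤` if the point never hits `A`). -/
noncomputable def tau (A : Set (Omega 𝒞)) (x : Omega 𝒞) : ℕ∞ :=
  sInf {e : ℕ∞ | ∃ k : ℕ, e = (k : ℕ∞) ∧ 1 ≤ k ∧ shiftk (k : ℤ) x ∈ A}

/-- The period `p_A = min {k ∈ {1,…,n} : A ∩ T^{-k} A ≠ ∅}`. -/
noncomputable def period (n : ℕ) (A : Set (Omega 𝒞)) : ℕ :=
  sInf {k : ℕ | 1 ≤ k ∧ k ≤ n ∧ (A ∩ shiftk (k : ℤ) ⁻¹' A).Nonempty}

/-- The secondary periods `ℛ(A) = {k ∈ {⌊n/p_A⌋ p_A + 1, …, n-1} : A ∩ T^{-k} A ≠ ∅}`. -/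
noncomputable def secondary (n : ℕ) (A : Set (Omega 𝒞)) : Set ℕ :=
  {k : ℕ | (n / period n A) * period n A < k ∧ k < n ∧ (A ∩ shiftk (k : ℤ) ⁻¹' A).Nonempty}

open Classical in
/-- `n_A = min ℛ(A)` if `ℛ(A) ≠ ∅`, and `n_A = n` otherwise. -/
noncomputable def nA (n : ℕ) (A : Set (Omega 𝒞)) : ℕ :=
  if (secondary n A).Nonempty then sInf (secondary n A) else n

/-- The σ-algebra `ℱ_I` generated by the coordinates with indices in `I`. -/
def coordAlg [MeasurableSpace 𝒞] (I : Set ℤ) : MeasurableSpace (Omega 𝒞) :=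
  ⨆ i ∈ I, MeasurableSpace.comap (fun x : Omega 𝒞 => x i) inferInstance

/-- φ-mixing: `φ l` bounds `|ℙ_B(C) - ℙ(C)|` for all `B ∈ ℱ_{{0,…,n}}` with `ℙ(B) > 0`
and all `C ∈ ℱ_{{m : m ≥ n + l + 1}}`, and `φ l → 0` as `l → ∞`. -/
def IsPhiMixing [MeasurableSpace 𝒞] (μ : MeasureTheory.Measure (Omega 𝒞)) (φ : ℕ → ℝ) : Prop :=
  Tendsto φ atTop (nhds 0) ∧
  ∀ (l n : ℕ) (B C : Set (Omega 𝒞)),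
    MeasurableSet[coordAlg (Set.Icc (0 : ℤ) (n : ℤ))] B → 0 < μ B →
    MeasurableSet[coordAlg {i : ℤ | (n : ℤ) + (l : ℤ) + 1 ≤ i}] C →
    |(μ[|B] C).toReal - (μ C).toReal| ≤ φ l

/-- `ζ_A = ℙ_A(τ_A ≠ p_A)`. -/
noncomputable def zeta [MeasurableSpace 𝒞] (μ : MeasureTheory.Measure (Omega 𝒞)) (n : ℕ)
    (A : Set (Omega 𝒞)) : ℝ :=
  (μ[|A] {x | tau A x ≠ (period n A : ℕ∞)}).toReal

/-- `ε(A) = inf_{0 ≤ w ≤ n_A} [(2n + p_A) ℙ(A^{(w)}) + φ(n_A - w)]`. -/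
noncomputable def epsA [MeasurableSpace 𝒞] (μ : MeasureTheory.Measure (Omega 𝒞)) (φ : ℕ → ℝ)
    (n : ℕ) (a : ℕ → 𝒞) : ℝ :=
  (Finset.Iic (nA n (cyl n a))).inf' Finset.nonempty_Iic
    (fun w => ((2 * n + period n (cyl n a) : ℕ) : ℝ) * (μ (cylLast n w a)).toReal
       + φ (nA n (cyl n a) - w))

/-- `f(A,t) = ℙ(A) t e^{-(ζ_A - 16 ε(A)) ℙ(A) t}`. -/
noncomputable def fAt [MeasurableSpace 𝒞] (μ : MeasureTheory.Measure (Omega 𝒞)) (φ : ℕ → ℝ)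
    (n : ℕ) (a : ℕ → 𝒞) (t : ℝ) : ℝ :=
  (μ (cyl n a)).toReal * t *
    Real.exp (-(zeta μ n (cyl n a) - 16 * epsA μ φ n a) * (μ (cyl n a)).toReal * t)

/-- The sojourn time `S_A(x) = sup {k : x ∈ A ∩ T^{-j p_A} A for all j = 1,…,k}` (here `p`
stands for the period `p_A`), with values in `ℕ∞` and `S_A(x) = 0` when the set is empty. -/
noncomputable def sojourn (p : ℕ) (A : Set (Omega 𝒞)) (x : Omega 𝒞) : ℕ∞ :=
  sSup {e : ℕ∞ | ∃ k : ℕ, e = (k : ℕ∞) ∧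
    ∀ j : ℕ, 1 ≤ j → j ≤ k → x ∈ A ∩ shiftk ((j * p : ℕ) : ℤ) ⁻¹' A}

/-- `ρ_i(A) = ℙ(A | ∩_{j=1}^{i} T^{j p_A} A)` (here `p` stands for the period `p_A`;
note `T^{j} A = shiftk (-j) ⁻¹' A` since `T` is invertible). -/
noncomputable def rho [MeasurableSpace 𝒞] (μ : MeasureTheory.Measure (Omega 𝒞)) (p : ℕ)
    (A : Set (Omega 𝒞)) (i : ℕ) : ℝ :=
  (μ[| ⋂ j ∈ Finset.Icc 1 i, shiftk (-((j * p : ℕ) : ℤ)) ⁻¹' A] A).toReal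


/- Two returns to `A` at times `i < j` from the same point give a return at time `j - i`, so
`p_A ≤ j - i`; but all secondary periods lie in an interval `(⌊n/p_A⌋ p_A, n)` of length less
than `p_A`. -/

lemma shiftk_shiftk (k d : ℤ) (x : Omega 𝒞) : shiftk d (shiftk k x) = shiftk (k + d) x := by
  funext m
  simp only [shiftk, add_assoc, add_comm d k]

lemma nonempty_inter_preimage_shiftk_sub {A : Set (Omega 𝒞)} {i j : ℤ}
    (h : (shiftk i ⁻¹' A ∩ shiftk j ⁻¹' A).Nonempty) :
    (A ∩ shiftk (j - i) ⁻¹' A).Nonempty := by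
  obtain ⟨x, hxi, hxj⟩ := h
  refine ⟨shiftk i x, hxi, ?_⟩
  rwa [Set.mem_preimage, shiftk_shiftk, add_sub_cancel]

lemma period_le {n k : ℕ} {A : Set (Omega 𝒞)} (hk : 1 ≤ k) (hkn : k ≤ n)
    (hA : (A ∩ shiftk (k : ℤ) ⁻¹' A).Nonempty) : period n A ≤ k :=
  Nat.sInf_le ⟨hk, hkn, hA⟩

lemma one_le_period {n k : ℕ} {A : Set (Omega 𝒞)} (hk : 1 ≤ k) (hkn : k ≤ n)
    (hA : (A ∩ shiftk (k : ℤ) ⁻¹' A).Nonempty) : 1 ≤ period n A :=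
  (Nat.sInf_mem (s := {k | 1 ≤ k ∧ k ≤ n ∧ (A ∩ shiftk (k : ℤ) ⁻¹' A).Nonempty})
    ⟨k, hk, hkn, hA⟩).1

lemma sub_lt_period_of_mem_secondary {n i j : ℕ} {A : Set (Omega 𝒞)}
    (hi : i ∈ secondary n A) (hj : j ∈ secondary n A) : j - i < period n A := by
  obtain ⟨hi_gt, hi_lt, hi_ret⟩ := hi
  obtain ⟨-, hj_lt, -⟩ := hj
  have hp : 0 < period n A := one_le_period (by omega) hi_lt.le hi_ret
  have := Nat.lt_div_mul_add (a := n) hp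
  omega

lemma disjoint_preimage_shiftk_of_mem_secondary {n i j : ℕ} {A : Set (Omega 𝒞)}
    (hi : i ∈ secondary n A) (hj : j ∈ secondary n A) (hij : i < j) :
    Disjoint (shiftk (i : ℤ) ⁻¹' A) (shiftk (j : ℤ) ⁻¹' A) := by
  rw [Set.disjoint_iff_inter_eq_empty, ← Set.not_nonempty_iff_eq_empty]
  intro h
  have hret := nonempty_inter_preimage_shiftk_sub h
  rw [← Nat.cast_sub hij.le] at hret
  have hle := period_le (Nat.sub_pos_of_lt hij) ((Nat.sub_le j i).trans hj.2.1.le) hret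
  exact hle.not_gt (sub_lt_period_of_mem_secondary hi hj)

theorem secondary_disjoint_general {𝒞 : Type*}
    (n : ℕ) (a : ℕ → 𝒞)
    (i j : ℕ) (hi : i ∈ secondary n (cyl n a)) (hj : j ∈ secondary n (cyl n a))
    (hij : i ≠ j) :
    shiftk (i : ℤ) ⁻¹' cyl n a ∩ shiftk (j : ℤ) ⁻¹' cyl n a = ∅ := by
  rw [← Set.disjoint_iff_inter_eq_empty]
  rcases hij.lt_or_gt with h | h
  · exact disjoint_preimage_shiftk_of_mem_secondary hi hj h
  · exact (disjoint_preimage_shiftk_of_mem_secondary hj hi h).symm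

/-- **Lemma (disjointness of secondary returns).**  For distinct secondary periods
`i, j ∈ ℛ(A)`, the sets `T^{-i}A` and `T^{-j}A` are disjoint. -/
theorem secondary_disjoint {𝒞 : Type*} [Fintype 𝒞] [Nonempty 𝒞]
    (n : ℕ) (hn : 1 ≤ n) (a : ℕ → 𝒞)
    (i j : ℕ) (hi : i ∈ secondary n (cyl n a)) (hj : j ∈ secondary n (cyl n a))
    (hij : i ≠ j) :
    shiftk (i : ℤ) ⁻¹' cyl n a ∩ shiftk (j : ℤ) ⁻¹' cyl n a = ∅ :=
  secondary_disjoint_general n a i j hi hj hij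

end ReturnTimes
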